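/- arXiv:1008.0125 — 2 statements merged into one kernel-verified Lean document; each statement's English description precedes it below -/
import Mathlib

section
/- Fix β > 0 and an integer n ≥ 1, and let 0 ≤ a ≤ b ≤ n be integers with a + b ≤ n. Define ε(a,b) = E_{μ_{ab}}[j] − (a+b)/2, where E_{μ_{ab}}[j] is the mean of μ_{ab}. Then ε(a,b) ≥ 0. Moreover, for any integers 0 ≤ c ≤ d ≤ n with c ≤ min{a,d} and max{a,d} ≤ b, one has ε(a,b) ≤ ε(c,d). -/
namespace SOS

/-- The weight `exp(-β(|j-a| + |j-b|))` defining the distribution `μ_{ab}` on `{0,…,n}`. -/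
noncomputable def wt (β : ℝ) (a b j : ℕ) : ℝ :=
  Real.exp (-β * (|(j : ℝ) - (a : ℝ)| + |(j : ℝ) - (b : ℝ)|))

/-- The mean `E_{μ_{ab}}[j]` of the distribution `μ_{ab}` on `{0,…,n}`. -/
noncomputable def meanAB (β : ℝ) (n a b : ℕ) : ℝ :=
  (∑ j ∈ Finset.range (n + 1), (j : ℝ) * wt β a b j) / ∑ j ∈ Finset.range (n + 1), wt β a b j

/-- `ε(a,b) = E_{μ_{ab}}[j] - (a+b)/2`. -/
noncomputable def epsAB (β : ℝ) (n a b : ℕ) : ℝ :=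
  meanAB β n a b - ((a : ℝ) + (b : ℝ)) / 2
noncomputable def Gs (q : ℝ) (m : ℕ) : ℝ := ∑ i ∈ Finset.range m, q^(i+1)
noncomputable def Ks (q : ℝ) (m : ℕ) : ℝ := ∑ i ∈ Finset.range m, ((i:ℝ)+1) * q^(i+1)
noncomputable def qq (β : ℝ) : ℝ := Real.exp (-(2*β))

lemma Gs_closed (q : ℝ) (m : ℕ) : (1-q) * Gs q m = q - q^(m+1) := by
  induction m with
  | zero => simp [Gs]
  | succ k ih => rw [Gs, Finset.sum_range_succ, ← Gs, mul_add, ih]; ring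

lemma Ks_closed (q : ℝ) (m : ℕ) : (1-q) * Ks q m = Gs q m - (m:ℝ) * q^(m+1) := by
  induction m with
  | zero => simp [Ks, Gs]
  | succ k ih =>
    have hG : Gs q (k+1) = Gs q k + q^(k+1) := by rw [Gs, Finset.sum_range_succ, ← Gs]
    rw [Ks, Finset.sum_range_succ, ← Ks, mul_add, ih, hG]
    push_cast; ring

lemma mul_sum_add (s : Finset ℕ) (c d : ℝ) (X Y : ℕ → ℝ) :
    c * ((∑ i ∈ s, X i) + d * ∑ i ∈ s, Y i) = ∑ i ∈ s, c * (X i + d * Y i) := by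
  simp only [mul_add, Finset.mul_sum, Finset.sum_add_distrib]

lemma sum_id_real (m : ℕ) : (∑ i ∈ Finset.range m, (i:ℝ)) = m * (m-1) / 2 := by
  induction m with
  | zero => simp
  | succ k ih => rw [Finset.sum_range_succ, ih]; push_cast; ring

variable {β : ℝ}

lemma qq_pos : 0 < qq β := Real.exp_pos _
lemma qq_lt_one (hβ : 0 < β) : qq β < 1 := by
  rw [qq, Real.exp_lt_one_iff]; linarith

lemma wt_left {a b j : ℕ} (hj : j < a) (hab : a ≤ b) :
    wt β a b j = Real.exp (-(β*((b:ℝ)-(a:ℝ)))) * (qq β)^(a-j) := by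
  unfold wt qq
  rw [← Real.exp_nat_mul, ← Real.exp_add]
  congr 1
  have hja : (j:ℝ) ≤ (a:ℝ) := by exact_mod_cast hj.le
  have hab' : (a:ℝ) ≤ (b:ℝ) := by exact_mod_cast hab
  have hc : ((a-j:ℕ):ℝ) = (a:ℝ) - (j:ℝ) := by
    rw [Nat.cast_sub hj.le]
  rw [abs_of_nonpos (by linarith), abs_of_nonpos (by linarith), hc]
  ring

lemma wt_mid {a b j : ℕ} (haj : a ≤ j) (hjb : j ≤ b) :
    wt β a b j = Real.exp (-(β*((b:ℝ)-(a:ℝ)))) := by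
  unfold wt
  congr 1
  have h1 : (a:ℝ) ≤ (j:ℝ) := by exact_mod_cast haj
  have h2 : (j:ℝ) ≤ (b:ℝ) := by exact_mod_cast hjb
  rw [abs_of_nonneg (by linarith), abs_of_nonpos (by linarith)]
  ring

lemma wt_right {a b j : ℕ} (hbj : b < j) (hab : a ≤ b) :
    wt β a b j = Real.exp (-(β*((b:ℝ)-(a:ℝ)))) * (qq β)^(j-b) := by
  unfold wt qq
  rw [← Real.exp_nat_mul, ← Real.exp_add]
  congr 1
  have h1 : (b:ℝ) ≤ (j:ℝ) := by exact_mod_cast hbj.le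
  have hab' : (a:ℝ) ≤ (b:ℝ) := by exact_mod_cast hab
  have hc : ((j-b:ℕ):ℝ) = (j:ℝ) - (b:ℝ) := by rw [Nat.cast_sub hbj.le]
  rw [abs_of_nonneg (by linarith), abs_of_nonneg (by linarith), hc]
  ring

lemma sum_wt {n a b : ℕ} (hab : a ≤ b) (hbn : b ≤ n) :
    ∑ j ∈ Finset.range (n+1), wt β a b j
      = Real.exp (-(β*((b:ℝ)-(a:ℝ)))) * (((b:ℝ)-(a:ℝ)+1) + Gs (qq β) a + Gs (qq β) (n-b)) := by
  set C := Real.exp (-(β*((b:ℝ)-(a:ℝ)))) with hC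
  set q := qq β with hq
  rw [Finset.range_eq_Ico,
      ← Finset.sum_Ico_consecutive _ (Nat.zero_le a) (by omega : a ≤ n+1),
      ← Finset.sum_Ico_consecutive _ (by omega : a ≤ b+1) (by omega : b+1 ≤ n+1)]
  have h1 : ∑ j ∈ Finset.Ico 0 a, wt β a b j = C * Gs q a := by
    rw [← Finset.range_eq_Ico]
    rw [Finset.sum_congr rfl (fun j hj => wt_left (Finset.mem_range.mp hj) hab)]
    rw [← Finset.sum_range_reflect]
    rw [Gs, Finset.mul_sum]
    refine Finset.sum_congr rfl (fun j hj => ?_)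
    have hj' : j < a := Finset.mem_range.mp hj
    congr 2
    omega
  have h2 : ∑ j ∈ Finset.Ico a (b+1), wt β a b j = ((b:ℝ)-(a:ℝ)+1) * C := by
    rw [Finset.sum_congr rfl (fun j hj => by
      have := Finset.mem_Ico.mp hj
      exact wt_mid this.1 (by omega))]
    rw [Finset.sum_const, Nat.card_Ico]
    have : ((b+1-a:ℕ):ℝ) = (b:ℝ)-(a:ℝ)+1 := by
      rw [Nat.cast_sub (by omega)]; push_cast; ring
    rw [nsmul_eq_mul, this]
  have h3 : ∑ j ∈ Finset.Ico (b+1) (n+1), wt β a b j = C * Gs q (n-b) := by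
    rw [Finset.sum_Ico_eq_sum_range]
    have hnb : n+1-(b+1) = n-b := by omega
    rw [hnb, Gs, Finset.mul_sum]
    refine Finset.sum_congr rfl (fun i hi => ?_)
    rw [wt_right (by omega) hab]
    congr 2
    omega
  rw [h1, h2, h3]; ring

lemma sum_phiwt {n a b : ℕ} (hab : a ≤ b) (hbn : b ≤ n) :
    ∑ j ∈ Finset.range (n+1), ((j:ℝ) - ((a:ℝ)+(b:ℝ))/2) * wt β a b j
      = Real.exp (-(β*((b:ℝ)-(a:ℝ)))) *
          ((Ks (qq β) (n-b) - Ks (qq β) a) + (((b:ℝ)-(a:ℝ))/2) * (Gs (qq β) (n-b) - Gs (qq β) a)) := by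
  set C := Real.exp (-(β*((b:ℝ)-(a:ℝ)))) with hC
  set q := qq β with hq
  rw [Finset.range_eq_Ico,
      ← Finset.sum_Ico_consecutive _ (Nat.zero_le a) (by omega : a ≤ n+1),
      ← Finset.sum_Ico_consecutive _ (by omega : a ≤ b+1) (by omega : b+1 ≤ n+1)]
  have h1 : ∑ j ∈ Finset.Ico 0 a, ((j:ℝ) - ((a:ℝ)+(b:ℝ))/2) * wt β a b j
      = -C * (Ks q a + (((b:ℝ)-(a:ℝ))/2) * Gs q a) := by
    rw [← Finset.range_eq_Ico]
    rw [Finset.sum_congr rfl (fun j hj => by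
      rw [wt_left (Finset.mem_range.mp hj) hab])]
    rw [← Finset.sum_range_reflect]
    rw [Ks, Gs, mul_sum_add]
    refine Finset.sum_congr rfl (fun j hj => ?_)
    have hj' : j < a := Finset.mem_range.mp hj
    have e2 : a - (a-1-j) = j+1 := by omega
    have e3 : ((a-1-j:ℕ):ℝ) = (a:ℝ)-1-(j:ℝ) := by
      rw [Nat.cast_sub (by omega), Nat.cast_sub (by omega)]; push_cast; ring
    rw [e2, e3]
    ring
  have h2 : ∑ j ∈ Finset.Ico a (b+1), ((j:ℝ) - ((a:ℝ)+(b:ℝ))/2) * wt β a b j = 0 := by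
    rw [Finset.sum_congr rfl (fun j hj => by
      have := Finset.mem_Ico.mp hj
      rw [wt_mid this.1 (by omega : j ≤ b)])]
    rw [Finset.sum_Ico_eq_sum_range]
    have hm : b+1-a ≥ 1 := by omega
    have : ∀ i ∈ Finset.range (b+1-a), (((a+i:ℕ):ℝ) - ((a:ℝ)+(b:ℝ))/2) * C
        = ((i:ℝ) + ((a:ℝ)-(b:ℝ))/2) * C := by
      intro i hi; push_cast; ring
    rw [Finset.sum_congr rfl this]
    have hsum : ∑ i ∈ Finset.range (b+1-a), (((i:ℝ) + ((a:ℝ)-(b:ℝ))/2) * C)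
        = ((∑ i ∈ Finset.range (b+1-a), (i:ℝ)) + (b+1-a:ℕ) * (((a:ℝ)-(b:ℝ))/2)) * C := by
      rw [← Finset.sum_mul]
      congr 1
      rw [Finset.sum_add_distrib, Finset.sum_const, nsmul_eq_mul, Finset.card_range]
    rw [hsum, sum_id_real]
    have hcast : ((b+1-a:ℕ):ℝ) = (b:ℝ)-(a:ℝ)+1 := by
      rw [Nat.cast_sub (by omega)]; push_cast; ring
    rw [hcast]
    have : ((b:ℝ)-(a:ℝ)+1) * ((b:ℝ)-(a:ℝ)+1-1) / 2 + ((b:ℝ)-(a:ℝ)+1) * (((a:ℝ)-(b:ℝ))/2) = 0 := by ring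
    rw [this, zero_mul]
  have h3 : ∑ j ∈ Finset.Ico (b+1) (n+1), ((j:ℝ) - ((a:ℝ)+(b:ℝ))/2) * wt β a b j
      = C * (Ks q (n-b) + (((b:ℝ)-(a:ℝ))/2) * Gs q (n-b)) := by
    rw [Finset.sum_Ico_eq_sum_range]
    have hnb : n+1-(b+1) = n-b := by omega
    rw [hnb, Ks, Gs, mul_sum_add]
    refine Finset.sum_congr rfl (fun i hi => ?_)
    rw [wt_right (by omega : b < b+1+i) hab]
    have e1 : b+1+i-b = i+1 := by omega
    rw [e1]
    push_cast
    ring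
  rw [h1, h2, h3]; ring



noncomputable def Tt2 (q a u r v L : ℝ) : ℝ :=
  q*(u-v) + q*(1-q)*(a*u - r*v) + (L/2)*q*(1-q)*(u-v)
noncomputable def St (q u v L : ℝ) : ℝ := (L+1)*(1-q) + q*(2-u-v)

theorem keyA (q a r L u v : ℝ) (hq0 : 0 < q) (hq1 : q < 1)
    (ha : 0 ≤ a) (hr : 1 ≤ r) (hL : 1 ≤ L)
    (hu1 : u ≤ 1) (hv0 : 0 ≤ v) (hvu : v ≤ u) :
    Tt2 q (a+1) (q*u) r v (L-1) * St q u v L ≤ Tt2 q a u r v L * St q (q*u) v (L-1) := by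
  have ht0 : (0:ℝ) < 1 - q := by linarith
  have hu0 : 0 ≤ u := hv0.trans hvu
  have hv1 : v ≤ 1 := hvu.trans hu1
  have h1u : 0 ≤ 1 - u := by linarith
  have h1v : 0 ≤ 1 - v := by linarith
  have huv : 0 ≤ u - v := by linarith
  have huq : 0 ≤ 1 - u*q := by nlinarith
  have hvq : 0 ≤ 1 - v*q := by nlinarith
  have t2 : (0:ℝ) ≤ (1-q)^2 * q := by positivity
  have t3 : (0:ℝ) ≤ (1-q)^3 * q := by positivity
  unfold Tt2 St
  nlinarith [mul_nonneg (mul_nonneg ht0.le hq0.le) (sq_nonneg (u-v)),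
    mul_nonneg (mul_nonneg t2 hu0) h1u,
    mul_nonneg (mul_nonneg t2 hv0) h1v,
    mul_nonneg (mul_nonneg t2 hv0) h1u,
    mul_nonneg (mul_nonneg t2 hu0) huv,
    mul_nonneg (mul_nonneg t3 hu0) hv0,
    mul_nonneg (mul_nonneg t3 hu0) hu0,
    mul_nonneg (mul_nonneg (mul_nonneg ha t2) (mul_nonneg hq0.le hu0)) h1v,
    mul_nonneg (mul_nonneg (mul_nonneg ha (by linarith : (0:ℝ) ≤ L)) t3) hu0,
    mul_nonneg (mul_nonneg (mul_nonneg (by linarith : (0:ℝ) ≤ r - 1) t2) hv0) huq,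
    mul_nonneg (mul_nonneg (mul_nonneg (by linarith : (0:ℝ) ≤ L - 1) t2) hu0) hvq,
    mul_nonneg (mul_nonneg (mul_nonneg (by linarith : (0:ℝ) ≤ L - 1) (by linarith : (0:ℝ) ≤ L + 1)) t3) hu0]

theorem keyB (q a m l u w : ℝ) (hq0 : 0 < q) (hq1 : q < 1)
    (ha : 0 ≤ a) (hm : a ≤ m) (hl : 0 ≤ l)
    (hu1 : u ≤ 1) (hw0 : 0 ≤ w) (hwu : w ≤ u) :
    Tt2 q a u m w (l+1) * St q u (q*w) l ≤ Tt2 q a u (m+1) (q*w) l * St q u w (l+1) := by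
  have ht0 : (0:ℝ) < 1 - q := by linarith
  have hu0 : 0 ≤ u := hw0.trans hwu
  have hw1 : w ≤ 1 := hwu.trans hu1
  have h1u : 0 ≤ 1 - u := by linarith
  have h1w : 0 ≤ 1 - w := by linarith
  have huw : 0 ≤ u - w := by linarith
  have huq : 0 ≤ 1 - u*q := by nlinarith
  have hwq : 0 ≤ 1 - w*q := by nlinarith
  have hm0 : 0 ≤ m := ha.trans hm
  have t2 : (0:ℝ) ≤ (1-q)^2 * q := by positivity
  have t3 : (0:ℝ) ≤ (1-q)^3 * q := by positivity
  unfold Tt2 St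
  nlinarith [mul_nonneg (mul_nonneg ht0.le hq0.le) (sq_nonneg (u-w)),
    mul_nonneg (mul_nonneg t2 hw0) h1u,
    mul_nonneg (mul_nonneg t2 hu0) h1u,
    mul_nonneg (mul_nonneg t2 hw0) h1w,
    mul_nonneg (mul_nonneg t3 hw0) hw0,
    mul_nonneg (mul_nonneg t3 hu0) hw0,
    mul_nonneg (mul_nonneg (mul_nonneg ha t2) hu0) hwq,
    mul_nonneg (mul_nonneg (mul_nonneg hm0 t2) hw0) huq,
    mul_nonneg (mul_nonneg (mul_nonneg hl t2) hw0) (by linarith : (0:ℝ) ≤ 1 + (1-q) - u*q),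
    mul_nonneg (mul_nonneg (mul_nonneg hl hl) t3) hw0,
    mul_nonneg (mul_nonneg (mul_nonneg hm0 hl) t3) hw0]

noncomputable def NumR (q : ℝ) (a r : ℕ) (L : ℝ) : ℝ :=
  (Ks q r - Ks q a) + (L/2) * (Gs q r - Gs q a)
noncomputable def SumR (q : ℝ) (a r : ℕ) (L : ℝ) : ℝ := (L+1) + Gs q a + Gs q r

lemma Gs_nonneg {q : ℝ} (hq : 0 ≤ q) (m : ℕ) : 0 ≤ Gs q m :=
  Finset.sum_nonneg fun i _ => by positivity

lemma SumR_pos {q : ℝ} (hq : 0 ≤ q) {a r : ℕ} {L : ℝ} (hL : 0 ≤ L) : 0 < SumR q a r L := by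
  have h1 := Gs_nonneg hq a
  have h2 := Gs_nonneg hq r
  unfold SumR; linarith

lemma eps_eq_NS (hβ : 0 < β) {n a b : ℕ} (hab : a ≤ b) (hbn : b ≤ n) :
    epsAB β n a b = NumR (qq β) a (n-b) ((b:ℝ)-(a:ℝ)) / SumR (qq β) a (n-b) ((b:ℝ)-(a:ℝ)) := by
  have hSumpos : 0 < ∑ j ∈ Finset.range (n+1), wt β a b j :=
    Finset.sum_pos (fun j _ => Real.exp_pos _) ⟨0, Finset.mem_range.mpr (by omega)⟩
  have hsplit : (∑ j ∈ Finset.range (n+1), ((j:ℝ) - ((a:ℝ)+(b:ℝ))/2) * wt β a b j)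
      = (∑ j ∈ Finset.range (n+1), (j:ℝ) * wt β a b j)
        - (((a:ℝ)+(b:ℝ))/2) * ∑ j ∈ Finset.range (n+1), wt β a b j := by
    rw [Finset.mul_sum, ← Finset.sum_sub_distrib]
    exact Finset.sum_congr rfl fun j _ => by ring
  have h1 : epsAB β n a b
      = (∑ j ∈ Finset.range (n+1), ((j:ℝ) - ((a:ℝ)+(b:ℝ))/2) * wt β a b j)
        / (∑ j ∈ Finset.range (n+1), wt β a b j) := by
    unfold epsAB meanAB
    rw [hsplit, sub_div, mul_div_assoc, div_self hSumpos.ne', mul_one]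
  rw [h1, sum_phiwt hab hbn, sum_wt hab hbn,
    mul_div_mul_left _ _ (Real.exp_ne_zero _)]
  rfl

lemma SumR_St {q : ℝ} (a r : ℕ) (L : ℝ) :
    St q (q^a) (q^r) L = (1-q) * SumR q a r L := by
  unfold St SumR
  rw [mul_add, mul_add, Gs_closed, Gs_closed, pow_succ, pow_succ]
  ring

lemma NumR_Tt2 {q : ℝ} (a r : ℕ) (L : ℝ) :
    Tt2 q (a:ℝ) (q^a) (r:ℝ) (q^r) L = (1-q)^2 * NumR q a r L := by
  have hKa := Ks_closed q a
  have hKr := Ks_closed q r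
  have hGa := Gs_closed q a
  have hGr := Gs_closed q r
  unfold Tt2 NumR
  linear_combination (-(1-q))*hKr + (1-q)*hKa - ((1-q)*(L/2) + 1)*hGr + ((1-q)*(L/2) + 1)*hGa

lemma NumR_nonneg {q : ℝ} (hq0 : 0 ≤ q) {a r : ℕ} (har : a ≤ r) {L : ℝ} (hL : 0 ≤ L) :
    0 ≤ NumR q a r L := by
  have hK : Ks q a ≤ Ks q r := by
    apply Finset.sum_le_sum_of_subset_of_nonneg (Finset.range_subset_range.2 har)
    intro i _ _; positivity
  have hG : Gs q a ≤ Gs q r := by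
    apply Finset.sum_le_sum_of_subset_of_nonneg (Finset.range_subset_range.2 har)
    intro i _ _; positivity
  unfold NumR
  nlinarith

lemma eps_nonneg (hβ : 0 < β) {n a b : ℕ} (hab : a ≤ b) (hbn : b ≤ n) (habn : a+b ≤ n) :
    0 ≤ epsAB β n a b := by
  rw [eps_eq_NS hβ hab hbn]
  have hq0 : (0:ℝ) ≤ qq β := (qq_pos).le
  have hL : (0:ℝ) ≤ (b:ℝ)-(a:ℝ) := by
    have : (a:ℝ) ≤ b := by exact_mod_cast hab
    linarith
  exact div_nonneg (NumR_nonneg hq0 (by omega) hL) (SumR_pos hq0 hL).le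

lemma stepA (hβ : 0 < β) {n a b : ℕ} (h1 : a+1 ≤ b) (h2 : a+1+b ≤ n) :
    epsAB β n (a+1) b ≤ epsAB β n a b := by
  have hbn : b ≤ n := by omega
  set q := qq β with hqd
  have hq0 : 0 < q := qq_pos
  have hq1 : q < 1 := qq_lt_one hβ
  have hab1 : ((a:ℝ)+1) ≤ (b:ℝ) := by exact_mod_cast h1
  have hL0 : (0:ℝ) ≤ (b:ℝ) - ((a+1:ℕ):ℝ) := by push_cast; linarith
  have hL0' : (0:ℝ) ≤ (b:ℝ) - (a:ℝ) := by linarith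
  rw [eps_eq_NS hβ (by omega) hbn, eps_eq_NS hβ (by omega) hbn,
    div_le_div_iff₀ (SumR_pos hq0.le hL0) (SumR_pos hq0.le hL0')]
  have key := keyA q (a:ℝ) ((n-b:ℕ):ℝ) ((b:ℝ)-(a:ℝ)) (q^a) (q^(n-b)) hq0 hq1
    (by positivity) (by exact_mod_cast Nat.one_le_cast.mpr (by omega : 1 ≤ n-b))
    (by linarith) (pow_le_one₀ hq0.le hq1.le) (by positivity)
    (pow_le_pow_of_le_one hq0.le hq1.le (by omega : a ≤ n-b))
  have eq1 : Tt2 q ((a:ℝ)+1) (q*q^a) ((n-b:ℕ):ℝ) (q^(n-b)) (((b:ℝ)-(a:ℝ))-1)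
      = (1-q)^2 * NumR q (a+1) (n-b) ((b:ℝ)-((a+1:ℕ):ℝ)) := by
    rw [← NumR_Tt2]
    unfold Tt2
    push_cast
    ring
  have eq2 : St q (q^a) (q^(n-b)) ((b:ℝ)-(a:ℝ))
      = (1-q) * SumR q a (n-b) ((b:ℝ)-(a:ℝ)) := SumR_St a (n-b) _
  have eq3 : Tt2 q (a:ℝ) (q^a) ((n-b:ℕ):ℝ) (q^(n-b)) ((b:ℝ)-(a:ℝ))
      = (1-q)^2 * NumR q a (n-b) ((b:ℝ)-(a:ℝ)) := NumR_Tt2 a (n-b) _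
  have eq4 : St q (q*q^a) (q^(n-b)) (((b:ℝ)-(a:ℝ))-1)
      = (1-q) * SumR q (a+1) (n-b) ((b:ℝ)-((a+1:ℕ):ℝ)) := by
    rw [← SumR_St]
    unfold St
    push_cast
    ring
  have ht' : (0:ℝ) < 1-q := by linarith
  have h3 : (0:ℝ) < (1-q)^3 := pow_pos ht' 3
  refine le_of_mul_le_mul_left ?_ h3
  calc (1-q)^3 * (NumR q (a+1) (n-b) ((b:ℝ)-((a+1:ℕ):ℝ)) * SumR q a (n-b) ((b:ℝ)-(a:ℝ)))
      = ((1-q)^2 * NumR q (a+1) (n-b) ((b:ℝ)-((a+1:ℕ):ℝ)))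
          * ((1-q) * SumR q a (n-b) ((b:ℝ)-(a:ℝ))) := by ring
    _ = Tt2 q ((a:ℝ)+1) (q*q^a) ((n-b:ℕ):ℝ) (q^(n-b)) (((b:ℝ)-(a:ℝ))-1)
          * St q (q^a) (q^(n-b)) ((b:ℝ)-(a:ℝ)) := by rw [eq1, eq2]
    _ ≤ Tt2 q (a:ℝ) (q^a) ((n-b:ℕ):ℝ) (q^(n-b)) ((b:ℝ)-(a:ℝ))
          * St q (q*q^a) (q^(n-b)) (((b:ℝ)-(a:ℝ))-1) := key
    _ = ((1-q)^2 * NumR q a (n-b) ((b:ℝ)-(a:ℝ)))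
          * ((1-q) * SumR q (a+1) (n-b) ((b:ℝ)-((a+1:ℕ):ℝ))) := by rw [eq3, eq4]
    _ = (1-q)^3 * (NumR q a (n-b) ((b:ℝ)-(a:ℝ)) * SumR q (a+1) (n-b) ((b:ℝ)-((a+1:ℕ):ℝ))) := by
        ring

lemma stepB (hβ : 0 < β) {n a b : ℕ} (h1 : a ≤ b) (h2 : a+b+1 ≤ n) :
    epsAB β n a (b+1) ≤ epsAB β n a b := by
  have hbn : b ≤ n := by omega
  set q := qq β with hqd
  have hq0 : 0 < q := qq_pos
  have hq1 : q < 1 := qq_lt_one hβ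
  have hab' : (a:ℝ) ≤ (b:ℝ) := by exact_mod_cast h1
  have hL0 : (0:ℝ) ≤ ((b+1:ℕ):ℝ) - (a:ℝ) := by push_cast; linarith
  have hL0' : (0:ℝ) ≤ (b:ℝ) - (a:ℝ) := by linarith
  rw [eps_eq_NS hβ (by omega) (by omega), eps_eq_NS hβ (by omega) hbn,
    div_le_div_iff₀ (SumR_pos hq0.le hL0) (SumR_pos hq0.le hL0')]
  have hnb : n - b = (n-(b+1))+1 := by omega
  have key := keyB q (a:ℝ) ((n-(b+1):ℕ):ℝ) ((b:ℝ)-(a:ℝ)) (q^a) (q^(n-(b+1))) hq0 hq1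
    (by positivity) (by exact_mod_cast Nat.cast_le.mpr (by omega : a ≤ n-(b+1)))
    (by linarith) (pow_le_one₀ hq0.le hq1.le) (by positivity)
    (pow_le_pow_of_le_one hq0.le hq1.le (by omega : a ≤ n-(b+1)))
  have eq1 : Tt2 q (a:ℝ) (q^a) ((n-(b+1):ℕ):ℝ) (q^(n-(b+1))) (((b:ℝ)-(a:ℝ))+1)
      = (1-q)^2 * NumR q a (n-(b+1)) (((b+1:ℕ):ℝ)-(a:ℝ)) := by
    rw [← NumR_Tt2]
    unfold Tt2
    push_cast
    ring
  have eq2 : St q (q^a) (q*q^(n-(b+1))) ((b:ℝ)-(a:ℝ))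
      = (1-q) * SumR q a (n-b) ((b:ℝ)-(a:ℝ)) := by
    rw [← SumR_St, hnb]
    unfold St
    rw [pow_succ]
    ring
  have eq3 : Tt2 q (a:ℝ) (q^a) (((n-(b+1):ℕ):ℝ)+1) (q*q^(n-(b+1))) ((b:ℝ)-(a:ℝ))
      = (1-q)^2 * NumR q a (n-b) ((b:ℝ)-(a:ℝ)) := by
    rw [← NumR_Tt2, hnb]
    unfold Tt2
    rw [pow_succ]
    push_cast
    ring
  have eq4 : St q (q^a) (q^(n-(b+1))) (((b:ℝ)-(a:ℝ))+1)
      = (1-q) * SumR q a (n-(b+1)) (((b+1:ℕ):ℝ)-(a:ℝ)) := by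
    rw [← SumR_St]
    unfold St
    push_cast
    ring
  have ht' : (0:ℝ) < 1-q := by linarith
  have h3 : (0:ℝ) < (1-q)^3 := pow_pos ht' 3
  refine le_of_mul_le_mul_left ?_ h3
  calc (1-q)^3 * (NumR q a (n-(b+1)) (((b+1:ℕ):ℝ)-(a:ℝ)) * SumR q a (n-b) ((b:ℝ)-(a:ℝ)))
      = ((1-q)^2 * NumR q a (n-(b+1)) (((b+1:ℕ):ℝ)-(a:ℝ)))
          * ((1-q) * SumR q a (n-b) ((b:ℝ)-(a:ℝ))) := by ring
    _ = Tt2 q (a:ℝ) (q^a) ((n-(b+1):ℕ):ℝ) (q^(n-(b+1))) (((b:ℝ)-(a:ℝ))+1)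
          * St q (q^a) (q*q^(n-(b+1))) ((b:ℝ)-(a:ℝ)) := by rw [eq1, eq2]
    _ ≤ Tt2 q (a:ℝ) (q^a) (((n-(b+1):ℕ):ℝ)+1) (q*q^(n-(b+1))) ((b:ℝ)-(a:ℝ))
          * St q (q^a) (q^(n-(b+1))) (((b:ℝ)-(a:ℝ))+1) := key
    _ = ((1-q)^2 * NumR q a (n-b) ((b:ℝ)-(a:ℝ)))
          * ((1-q) * SumR q a (n-(b+1)) (((b+1:ℕ):ℝ)-(a:ℝ))) := by rw [eq3, eq4]
    _ = (1-q)^3 * (NumR q a (n-b) ((b:ℝ)-(a:ℝ)) * SumR q a (n-(b+1)) (((b+1:ℕ):ℝ)-(a:ℝ))) := by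
        ring

lemma chainA (hβ : 0 < β) {n b : ℕ} : ∀ k a, a+k ≤ b → a+k+b ≤ n →
    epsAB β n (a+k) b ≤ epsAB β n a b := by
  intro k
  induction k with
  | zero => intro a _ _; simp
  | succ m ih =>
    intro a hk hn
    have h1 : epsAB β n (a+m+1) b ≤ epsAB β n (a+m) b := stepA hβ (by omega) (by omega)
    have h2 : epsAB β n (a+m) b ≤ epsAB β n a b := ih a (by omega) (by omega)
    calc epsAB β n (a+(m+1)) b = epsAB β n (a+m+1) b := by ring_nf
      _ ≤ epsAB β n (a+m) b := h1
      _ ≤ epsAB β n a b := h2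

lemma chainB (hβ : 0 < β) {n a : ℕ} : ∀ k b, a ≤ b → a+b+k ≤ n →
    epsAB β n a (b+k) ≤ epsAB β n a b := by
  intro k
  induction k with
  | zero => intro b _ _; simp
  | succ m ih =>
    intro b hb hn
    have h1 : epsAB β n a (b+m+1) ≤ epsAB β n a (b+m) := stepB hβ (by omega) (by omega)
    have h2 : epsAB β n a (b+m) ≤ epsAB β n a b := ih b (by omega) (by omega)
    calc epsAB β n a (b+(m+1)) = epsAB β n a (b+m+1) := by ring_nf
      _ ≤ epsAB β n a (b+m) := h1
      _ ≤ epsAB β n a b := h2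


/-- `ε(a,b) ≥ 0`, and `ε(a,b) ≤ ε(c,d)` whenever `c ≤ min{a,d} ≤ max{a,d} ≤ b`. -/
theorem eps_nonneg_and_monotone (β : ℝ) (hβ : 0 < β) (n : ℕ) (hn : 1 ≤ n)
    (a b : ℕ) (hab : a ≤ b) (hbn : b ≤ n) (habn : a + b ≤ n) :
    0 ≤ epsAB β n a b ∧
      ∀ c d : ℕ, c ≤ d → d ≤ n → c ≤ min a d → max a d ≤ b →
        epsAB β n a b ≤ epsAB β n c d := by
  constructor
  · exact eps_nonneg hβ hab hbn habn
  · intro c d hcd hdn hcm hmax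
    have hca : c ≤ a := le_trans hcm (min_le_left _ _)
    have hdb : d ≤ b := le_trans (le_max_right a d) hmax
    have h1 : epsAB β n a b ≤ epsAB β n c b := by
      have : a = c + (a - c) := by omega
      rw [this]
      exact chainA hβ (a-c) c (by omega) (by omega)
    have h2 : epsAB β n c b ≤ epsAB β n c d := by
      have : b = d + (b - d) := by omega
      rw [this]
      exact chainB hβ (b-d) d (by omega) (by omega)
    exact h1.trans h2


end SOS
end

section
/- Fix β > 0 and an integer n ≥ 1, and let 0 ≤ a ≤ b ≤ n and 0 ≤ c ≤ d ≤ n be integers with c ≤ a and d ≤ b (equivalently, c ≤ min{a,d} ≤ max{a,d} ≤ b). Then 0 ≤ E_{μ_{ab}}[j] − E_{μ_{cd}}[j] ≤ (a+b)/2 − (c+d)/2, where E_{μ_{ab}}[j] and E_{μ_{cd}}[j] denote the means of μ_{ab} and μ_{cd}. -/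
/-
Write `q = e^{-2β} ∈ (0, 1)`. For `a ≤ b` the weight of `μ_{ab}` at `j` is
`e^{-β(b-a)} q^{dist(j, [a, b])}`, so replacing `b` by `b + 1` multiplies the weights above `b` by
`1/q` and leaves the others alone. Cutting `{0, …, n}` after `b` into a lower block (flat on
`[a, b]`, geometric below `a`) and a geometric upper block, the increase of the mean is
`(1 - q)(Λ₀(G + G₁) + Λ₁G) / ((Λ₀ + G)(Λ₀ + qG))`, where `Λ₀, G` are the masses and `Λ₁, G₁` the
first moments of the two blocks, measured away from the cut. This is nonnegative, and the closed
forms of the geometric sums together with Bernoulli's inequality bound it by `1/2`, the value it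
takes for untruncated blocks, where `μ_{ab}` is symmetric about `(a + b)/2`. The reflection
`j ↦ n - j` exchanges the roles of `a` and `b`, and unit steps chain to the theorem.
-/

namespace SOS

open Finset Real

section GeometricSums

variable {q : ℝ}

theorem one_sub_mul_sum_range_mul_pow (q : ℝ) (r : ℕ) :
    (1 - q) * ∑ k ∈ range r, (k : ℝ) * q ^ k = q * ∑ k ∈ range r, q ^ k - r * q ^ r := by
  induction r with
  | zero => simp
  | succ r ih => rw [sum_range_succ, sum_range_succ, mul_add, ih]; push_cast; ring

theorem one_sub_mul_sum_range_mul_pow_le (hq : 0 ≤ q) (r : ℕ) :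
    (1 - q) * ∑ k ∈ range r, (k : ℝ) * q ^ k ≤ q * ∑ k ∈ range r, q ^ k := by
  rw [one_sub_mul_sum_range_mul_pow]
  exact sub_le_self _ (by positivity)

theorem sum_range_mul_pow_tsub (f : ℕ → ℝ) (q : ℝ) {e N : ℕ} (he : e ≤ N) :
    ∑ i ∈ range (N + 1), f i * q ^ (i - e)
      = ∑ i ∈ range (e + 1), f i + q * ∑ k ∈ range (N - e), f (e + 1 + k) * q ^ k := by
  rw [show N + 1 = e + 1 + (N - e) by omega, sum_range_add, mul_sum]
  congr 1
  · refine sum_congr rfl fun i hi => ?_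
    rw [Nat.sub_eq_zero_of_le (Nat.lt_succ_iff.mp (mem_range.mp hi)), pow_zero, mul_one]
  · refine sum_congr rfl fun k _ => ?_
    rw [show e + 1 + k - e = k + 1 by omega, pow_succ]
    ring

theorem one_sub_mul_sum_range_pow_tsub (q : ℝ) {e N : ℕ} (he : e ≤ N) :
    (1 - q) * ∑ i ∈ range (N + 1), q ^ (i - e) = (e + 1) * (1 - q) + q * (1 - q ^ (N - e)) := by
  have h := sum_range_mul_pow_tsub (fun _ => 1) q he
  simp only [one_mul, sum_const, card_range, nsmul_eq_mul, mul_one] at h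
  rw [h, mul_add, mul_left_comm, mul_neg_geom_sum]
  push_cast
  ring

theorem two_mul_sum_range_mul_pow_tsub_le (hq : 0 ≤ q) {e N : ℕ} (he : e ≤ N) :
    2 * (1 - q) ^ 2 * ∑ i ∈ range (N + 1), (i : ℝ) * q ^ (i - e)
      ≤ e * (e + 1) * (1 - q) ^ 2 + 2 * e * q * (1 - q ^ (N - e)) * (1 - q)
        + 2 * q * (1 - q ^ (N - e)) ^ 2 := by
  set r := N - e
  have gauss : (∑ i ∈ range (e + 1), (i : ℝ)) * 2 = ((e : ℝ) + 1) * e := by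
    have h := congrArg (Nat.cast (R := ℝ)) (sum_range_id_mul_two (e + 1))
    push_cast [Nat.add_sub_cancel] at h
    exact h
  have geom := mul_neg_geom_sum q r
  have moment := one_sub_mul_sum_range_mul_pow q r
  have bernoulli : 1 - q ^ r ≤ r * (1 - q) := by
    have := one_add_mul_sub_le_pow (by linarith : (-1 : ℝ) ≤ q) r
    linarith
  have hP : 0 ≤ q * q ^ r := by positivity
  have tail : ∑ k ∈ range r, ((e + 1 + k : ℕ) : ℝ) * q ^ k
      = (e + 1) * ∑ k ∈ range r, q ^ k + ∑ k ∈ range r, (k : ℝ) * q ^ k := by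
    rw [mul_sum, ← sum_add_distrib]
    refine sum_congr rfl fun k _ => ?_
    push_cast
    ring
  rw [sum_range_mul_pow_tsub _ q he, tail]
  linear_combination (1 - q) ^ 2 * gauss + 2 * (1 - q) * q * (e + 1) * geom
    + 2 * q * (1 - q) * moment + 2 * q ^ 2 * geom + 2 * (q * q ^ r) * bernoulli

end GeometricSums

theorem tilt_polynomial_le {q e u t : ℝ} (hq₀ : 0 ≤ q) (hq₁ : q ≤ 1) (he : 0 ≤ e)
    (hu₀ : 0 ≤ u) (hu₁ : u ≤ 1) (ht : t ≤ 1) :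
    2 * ((e + 1) * (1 - q) + q * u) * t
        + t * (e * (e + 1) * (1 - q) ^ 2 + 2 * e * q * u * (1 - q) + 2 * q * u ^ 2)
      ≤ ((e + 1) * (1 - q) + q * u + t) * ((e + 1) * (1 - q) + q * u + q * t) := by
  have hs : 0 ≤ 1 - q := by linarith
  have ht' : 0 ≤ 1 - t := by linarith
  have hu' : 0 ≤ 1 - u := by linarith
  have hu2 : 0 ≤ 1 - u ^ 2 := by nlinarith
  have sos : ((e + 1) * (1 - q) + q * u + t) * ((e + 1) * (1 - q) + q * u + q * t)
      - (2 * ((e + 1) * (1 - q) + q * u) * t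
        + t * (e * (e + 1) * (1 - q) ^ 2 + 2 * e * q * u * (1 - q) + 2 * q * u ^ 2))
      = (e + 1) ^ 2 * (1 - q) ^ 2 * (1 - t) + (2 * e + 1) * q * u * (1 - q) * (1 - t)
        + q * ((t - u ^ 2) ^ 2 + u ^ 2 * (1 - u ^ 2) + (1 - q) * u * (1 - u)) := by
    ring
  rw [← sub_nonneg, sos]
  positivity

/-- For `a ≤ b`, the truncated exponent `a - j + (j - b)` is the distance from `j` to `[a, b]`. -/
noncomputable def qMean (q : ℝ) (n a b : ℕ) : ℝ :=
  (∑ j ∈ range (n + 1), (j : ℝ) * q ^ (a - j + (j - b)))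
    / ∑ j ∈ range (n + 1), q ^ (a - j + (j - b))

section qMean

variable {q : ℝ} {n a b : ℕ}

theorem sum_range_mul_pow_dist_eq (f : ℕ → ℝ) (q : ℝ) {c : ℕ} (hab : a ≤ b) (hbc : b ≤ c)
    (hcb : c ≤ b + 1) (hbn : b ≤ n) :
    ∑ j ∈ range (n + 1), f j * q ^ (a - j + (j - c))
      = ∑ i ∈ range (b + 1), f (b - i) * q ^ (i - (b - a))
        + q ^ (b + 1 - c) * ∑ k ∈ range (n - b), f (b + 1 + k) * q ^ k := by
  rw [show n + 1 = b + 1 + (n - b) by omega, sum_range_add, mul_sum, ← sum_range_reflect]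
  congr 1
  · refine sum_congr rfl fun i hi => ?_
    have hi : i ≤ b := Nat.lt_succ_iff.mp (mem_range.mp hi)
    rw [show b + 1 - 1 - i = b - i by omega, show a - (b - i) + (b - i - c) = i - (b - a) by omega]
  · refine sum_congr rfl fun k _ => ?_
    rw [show a - (b + 1 + k) + (b + 1 + k - c) = b + 1 - c + k by omega, pow_add]
    ring

theorem qMean_eq_blocks {c : ℕ} (hab : a ≤ b) (hbc : b ≤ c) (hcb : c ≤ b + 1) (hbn : b ≤ n) :
    qMean q n a c
      = (b * ∑ i ∈ range (b + 1), q ^ (i - (b - a))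
            - ∑ i ∈ range (b + 1), (i : ℝ) * q ^ (i - (b - a))
          + q ^ (b + 1 - c) * ((b + 1) * ∑ k ∈ range (n - b), q ^ k
            + ∑ k ∈ range (n - b), (k : ℝ) * q ^ k))
        / (∑ i ∈ range (b + 1), q ^ (i - (b - a))
            + q ^ (b + 1 - c) * ∑ k ∈ range (n - b), q ^ k) := by
  have mass := sum_range_mul_pow_dist_eq (fun _ => 1) q hab hbc hcb hbn
  have moment := sum_range_mul_pow_dist_eq (fun j => (j : ℝ)) q hab hbc hcb hbn
  simp only [one_mul] at mass
  have lower : ∑ i ∈ range (b + 1), ((b - i : ℕ) : ℝ) * q ^ (i - (b - a))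
      = b * ∑ i ∈ range (b + 1), q ^ (i - (b - a))
        - ∑ i ∈ range (b + 1), (i : ℝ) * q ^ (i - (b - a)) := by
    rw [mul_sum, ← sum_sub_distrib]
    refine sum_congr rfl fun i hi => ?_
    rw [Nat.cast_sub (Nat.lt_succ_iff.mp (mem_range.mp hi))]
    ring
  have upper : ∑ k ∈ range (n - b), ((b + 1 + k : ℕ) : ℝ) * q ^ k
      = (b + 1) * ∑ k ∈ range (n - b), q ^ k + ∑ k ∈ range (n - b), (k : ℝ) * q ^ k := by
    rw [mul_sum, ← sum_add_distrib]
    refine sum_congr rfl fun k _ => ?_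
    push_cast
    ring
  rw [qMean, mass, moment, lower, upper]

theorem qMean_succ_right_sub_eq (hq : 0 ≤ q) (hab : a ≤ b) (hbn : b ≤ n) :
    qMean q n a (b + 1) - qMean q n a b
      = (1 - q) * ((∑ i ∈ range (b + 1), q ^ (i - (b - a)))
            * (∑ k ∈ range (n - b), q ^ k + ∑ k ∈ range (n - b), (k : ℝ) * q ^ k)
          + (∑ i ∈ range (b + 1), (i : ℝ) * q ^ (i - (b - a))) * ∑ k ∈ range (n - b), q ^ k)
        / ((∑ i ∈ range (b + 1), q ^ (i - (b - a)) + ∑ k ∈ range (n - b), q ^ k)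
          * (∑ i ∈ range (b + 1), q ^ (i - (b - a)) + q * ∑ k ∈ range (n - b), q ^ k)) := by
  rw [qMean_eq_blocks hab b.le_succ le_rfl hbn, qMean_eq_blocks hab le_rfl b.le_succ hbn,
    Nat.sub_self, Nat.add_sub_cancel_left, pow_zero, pow_one, one_mul, one_mul]
  have hΛ : 0 < ∑ i ∈ range (b + 1), q ^ (i - (b - a)) :=
    sum_pos' (fun i _ => by positivity) ⟨0, by simp⟩
  have hG : 0 ≤ ∑ k ∈ range (n - b), q ^ k := sum_nonneg fun k _ => by positivity
  field_simp
  ring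

theorem qMean_succ_right_sub_mem_Icc (hq₀ : 0 ≤ q) (hq₁ : q < 1) (hab : a ≤ b) (hbn : b ≤ n) :
    qMean q n a (b + 1) - qMean q n a b ∈ Set.Icc 0 (1 / 2) := by
  rw [qMean_succ_right_sub_eq hq₀ hab hbn]
  set Λ₀ := ∑ i ∈ range (b + 1), q ^ (i - (b - a))
  set Λ₁ := ∑ i ∈ range (b + 1), (i : ℝ) * q ^ (i - (b - a))
  set G := ∑ k ∈ range (n - b), q ^ k
  set G₁ := ∑ k ∈ range (n - b), (k : ℝ) * q ^ k
  have hs : 0 < 1 - q := by linarith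
  have hΛ₀ : 0 < Λ₀ := sum_pos' (fun i _ => by positivity) ⟨0, by simp⟩
  have hΛ₁ : 0 ≤ Λ₁ := sum_nonneg fun i _ => by positivity
  have hG : 0 ≤ G := sum_nonneg fun k _ => by positivity
  have hG₁ : 0 ≤ G₁ := sum_nonneg fun k _ => by positivity
  refine ⟨by positivity, ?_⟩
  rw [div_le_iff₀ (by positivity)]
  have mass := one_sub_mul_sum_range_pow_tsub q (Nat.sub_le b a)
  have moment := two_mul_sum_range_mul_pow_tsub_le hq₀ (Nat.sub_le b a)
  rw [Nat.sub_sub_self hab] at mass moment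
  have tail := mul_neg_geom_sum q (n - b)
  have tail_moment := one_sub_mul_sum_range_mul_pow_le hq₀ (n - b)
  have hu : q ^ a ≤ 1 := pow_le_one₀ hq₀ hq₁.le
  have ht : 0 ≤ q ^ (n - b) := by positivity
  have poly := tilt_polynomial_le (e := ((b - a : ℕ) : ℝ)) hq₀ hq₁.le (by positivity)
    (sub_nonneg.mpr hu) (by linarith [pow_nonneg hq₀ a]) (by linarith : 1 - q ^ (n - b) ≤ 1)
  rw [← mass, ← tail] at poly
  suffices key : (1 - q) ^ 2 * (2 * ((1 - q) * (Λ₀ * (G + G₁) + Λ₁ * G)))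
      ≤ (1 - q) ^ 2 * ((Λ₀ + G) * (Λ₀ + q * G)) by
    linarith [le_of_mul_le_mul_left key (by positivity)]
  calc (1 - q) ^ 2 * (2 * ((1 - q) * (Λ₀ * (G + G₁) + Λ₁ * G)))
      = 2 * ((1 - q) * Λ₀) * ((1 - q) * G) * (1 - q) + 2 * ((1 - q) * Λ₀) * (1 - q) * ((1 - q) * G₁)
        + (2 * (1 - q) ^ 2 * Λ₁) * ((1 - q) * G) := by ring
    _ ≤ 2 * ((1 - q) * Λ₀) * ((1 - q) * G) * (1 - q) + 2 * ((1 - q) * Λ₀) * (1 - q) * (q * G)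
        + ((b - a : ℕ) * ((b - a : ℕ) + 1) * (1 - q) ^ 2
          + 2 * (b - a : ℕ) * q * (1 - q ^ a) * (1 - q) + 2 * q * (1 - q ^ a) ^ 2)
          * ((1 - q) * G) := by gcongr
    _ = 2 * ((1 - q) * Λ₀) * ((1 - q) * G)
        + ((1 - q) * G) * ((b - a : ℕ) * ((b - a : ℕ) + 1) * (1 - q) ^ 2
          + 2 * (b - a : ℕ) * q * (1 - q ^ a) * (1 - q) + 2 * q * (1 - q ^ a) ^ 2) := by ring
    _ ≤ ((1 - q) * Λ₀ + (1 - q) * G) * ((1 - q) * Λ₀ + q * ((1 - q) * G)) := poly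
    _ = (1 - q) ^ 2 * ((Λ₀ + G) * (Λ₀ + q * G)) := by ring

end qMean

theorem abs_sub_add_abs_sub_eq {a b : ℕ} (hab : a ≤ b) (j : ℕ) :
    |(j : ℝ) - a| + |(j : ℝ) - b| = (b - a : ℝ) + 2 * ((a - j + (j - b) : ℕ) : ℝ) := by
  rcases le_total j a with hja | haj
  · rw [Nat.sub_eq_zero_of_le (hja.trans hab), abs_of_nonpos (by simp [hja]),
      abs_of_nonpos (by simp [hja.trans hab])]
    push_cast [hja]
    ring
  rcases le_total j b with hjb | hbj
  · rw [Nat.sub_eq_zero_of_le haj, Nat.sub_eq_zero_of_le hjb, abs_of_nonneg (by simp [haj]),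
      abs_of_nonpos (by simp [hjb])]
    push_cast
    ring
  · rw [Nat.sub_eq_zero_of_le haj, abs_of_nonneg (by simp [haj]), abs_of_nonneg (by simp [hbj])]
    push_cast [hbj]
    ring

theorem wt_eq {a b : ℕ} (β : ℝ) (hab : a ≤ b) (j : ℕ) :
    wt β a b j = exp (-β * (b - a)) * exp (-2 * β) ^ (a - j + (j - b)) := by
  rw [wt, abs_sub_add_abs_sub_eq hab, ← exp_nat_mul, ← exp_add]
  ring_nf

theorem meanAB_eq_qMean {a b : ℕ} (β : ℝ) (n : ℕ) (hab : a ≤ b) :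
    meanAB β n a b = qMean (exp (-2 * β)) n a b := by
  simp_rw [meanAB, qMean, wt_eq β hab, mul_left_comm _ (exp _), ← mul_sum]
  exact mul_div_mul_left _ _ (exp_ne_zero _)

section Monotonicity

variable {β : ℝ} {n a b : ℕ}

theorem meanAB_succ_right_sub_mem_Icc (hβ : 0 < β) (hab : a ≤ b) (hbn : b ≤ n) :
    meanAB β n a (b + 1) - meanAB β n a b ∈ Set.Icc 0 (1 / 2) := by
  rw [meanAB_eq_qMean β n hab, meanAB_eq_qMean β n (hab.trans b.le_succ)]
  exact qMean_succ_right_sub_mem_Icc (exp_pos _).le (Real.exp_lt_one_iff.mpr (by linarith)) hab hbn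

theorem meanAB_monotoneOn_right (hβ : 0 < β) : MonotoneOn (meanAB β n a) (Set.Icc a n) :=
  monotoneOn_of_le_succ Set.ordConnected_Icc fun b _ hb _ => by
    rw [Order.succ_eq_add_one]
    linarith [(meanAB_succ_right_sub_mem_Icc hβ hb.1 hb.2).1]

theorem epsAB_antitoneOn_right (hβ : 0 < β) : AntitoneOn (epsAB β n a) (Set.Icc a n) :=
  antitoneOn_of_succ_le Set.ordConnected_Icc fun b _ hb _ => by
    rw [Order.succ_eq_add_one, epsAB, epsAB]
    push_cast
    linarith [(meanAB_succ_right_sub_mem_Icc hβ hb.1 hb.2).2]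

theorem wt_reflect (β : ℝ) {j : ℕ} (ha : a ≤ n) (hb : b ≤ n) (hj : j ≤ n) :
    wt β (n - b) (n - a) j = wt β a b (n - j) := by
  rw [wt, wt, Nat.cast_sub ha, Nat.cast_sub hb, Nat.cast_sub hj, add_comm, abs_sub_comm (j : ℝ),
    abs_sub_comm (j : ℝ)]
  ring_nf

theorem meanAB_reflect (β : ℝ) (ha : a ≤ n) (hb : b ≤ n) :
    meanAB β n a b = n - meanAB β n (n - b) (n - a) := by
  have reflect : ∀ f : ℕ → ℝ, ∑ j ∈ range (n + 1), f j * wt β (n - b) (n - a) j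
      = ∑ j ∈ range (n + 1), f (n - j) * wt β a b j := fun f => by
    rw [← sum_range_reflect (fun j => f (n - j) * wt β a b j)]
    refine sum_congr rfl fun j hj => ?_
    have hj : j ≤ n := Nat.lt_succ_iff.mp (mem_range.mp hj)
    rw [wt_reflect β ha hb hj, show n + 1 - 1 - j = n - j by omega, Nat.sub_sub_self hj]
  have mass := reflect fun _ => 1
  have moment := reflect fun j => (j : ℝ)
  simp only [one_mul] at mass
  have hZ : 0 < ∑ j ∈ range (n + 1), wt β a b j := sum_pos (fun j _ => exp_pos _) (by simp)
  rw [meanAB, meanAB, mass, moment, eq_sub_iff_add_eq, ← add_div, div_eq_iff hZ.ne',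
    mul_sum, ← sum_add_distrib]
  refine sum_congr rfl fun j hj => ?_
  rw [Nat.cast_sub (Nat.lt_succ_iff.mp (mem_range.mp hj))]
  ring

theorem epsAB_reflect (β : ℝ) (ha : a ≤ n) (hb : b ≤ n) :
    epsAB β n a b = -epsAB β n (n - b) (n - a) := by
  rw [epsAB, epsAB, meanAB_reflect β ha hb, Nat.cast_sub ha, Nat.cast_sub hb]
  ring

theorem meanAB_monotoneOn_left (hβ : 0 < β) (hbn : b ≤ n) :
    MonotoneOn (fun a => meanAB β n a b) (Set.Iic b) := fun c (hc : c ≤ b) a (ha : a ≤ b) hca => by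
  have h := meanAB_monotoneOn_right hβ (a := n - b) (n := n)
    ⟨by omega, by omega⟩ ⟨by omega, by omega⟩ (by omega : n - a ≤ n - c)
  simp only [meanAB_reflect β (ha.trans hbn) hbn, meanAB_reflect β (hc.trans hbn) hbn]
  linarith

theorem epsAB_antitoneOn_left (hβ : 0 < β) (hbn : b ≤ n) :
    AntitoneOn (fun a => epsAB β n a b) (Set.Iic b) := fun c (hc : c ≤ b) a (ha : a ≤ b) hca => by
  have h := epsAB_antitoneOn_right hβ (a := n - b) (n := n)
    ⟨by omega, by omega⟩ ⟨by omega, by omega⟩ (by omega : n - a ≤ n - c)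
  simp only [epsAB_reflect β (ha.trans hbn) hbn, epsAB_reflect β (hc.trans hbn) hbn]
  linarith

end Monotonicity

theorem mean_comparison_general (β : ℝ) (hβ : 0 < β) (n : ℕ)
    (a b c d : ℕ) (hab : a ≤ b) (hbn : b ≤ n) (hcd : c ≤ d)
    (hca : c ≤ a) (hdb : d ≤ b) :
    0 ≤ meanAB β n a b - meanAB β n c d ∧
      meanAB β n a b - meanAB β n c d
        ≤ ((a : ℝ) + (b : ℝ)) / 2 - ((c : ℝ) + (d : ℝ)) / 2 := by
  have hd : d ∈ Set.Icc c n := ⟨hcd, hdb.trans hbn⟩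
  have hb : b ∈ Set.Icc c n := ⟨hcd.trans hdb, hbn⟩
  have hc : c ∈ Set.Iic b := hca.trans hab
  have mean_right := meanAB_monotoneOn_right hβ hd hb hdb
  have mean_left := meanAB_monotoneOn_left hβ hbn hc hab hca
  have eps_right := epsAB_antitoneOn_right hβ hd hb hdb
  have eps_left := epsAB_antitoneOn_left hβ hbn hc hab hca
  simp only [epsAB] at eps_right eps_left
  constructor <;> linarith

/-- If `c ≤ a ≤ b ≤ n` and `c ≤ d ≤ b` then
`0 ≤ E_{μ_{ab}}[j] - E_{μ_{cd}}[j] ≤ (a+b)/2 - (c+d)/2`. -/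
theorem mean_comparison (β : ℝ) (hβ : 0 < β) (n : ℕ) (hn : 1 ≤ n)
    (a b c d : ℕ) (hab : a ≤ b) (hbn : b ≤ n) (hcd : c ≤ d) (hdn : d ≤ n)
    (hca : c ≤ a) (hdb : d ≤ b) :
    0 ≤ meanAB β n a b - meanAB β n c d ∧
      meanAB β n a b - meanAB β n c d
        ≤ ((a : ℝ) + (b : ℝ)) / 2 - ((c : ℝ) + (d : ℝ)) / 2 :=
  mean_comparison_general β hβ n a b c d hab hbn hcd hca hdb

end SOS
end
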